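/- arXiv:1903.10171 — 4 statements merged into one kernel-verified Lean document; each statement's English description precedes it below -/
import Mathlib

section
/- With λ + γ = 1 and π = (γ, λ), for all integers k ≥ 1, π Qᵏ = (1 - p_e)ᵏ π, where Q and p_e are as defined. -/
open Matrix

theorem pi_Q_pow
    (l g pG pB : ℝ) (hl0 : 0 ≤ l) (hl1 : l ≤ 1) (hg0 : 0 ≤ g) (hg1 : g ≤ 1)
    (hpG0 : 0 ≤ pG) (hpG1 : pG ≤ 1) (hpB0 : 0 ≤ pB) (hpB1 : pB ≤ 1)
    (hsum : l + g = 1) :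
    ∀ k : ℕ, 1 ≤ k →
      Matrix.vecMul ![g, l]
          (!![(1 - pG) * (1 - l), (1 - pG) * l;
              (1 - pB) * g, (1 - pB) * (1 - g)] ^ k)
        = (1 - (g * pG + l * pB)) ^ k • ![g, l] := by
  set Q : Matrix (Fin 2) (Fin 2) ℝ :=
    !![(1 - pG) * (1 - l), (1 - pG) * l; (1 - pB) * g, (1 - pB) * (1 - g)] with hQ
  set c : ℝ := 1 - (g * pG + l * pB) with hc
  have step : Matrix.vecMul ![g, l] Q = c • ![g, l] := by
    funext i
    fin_cases i <;>
      simp [hQ, hc, Matrix.vecMul, dotProduct, Fin.sum_univ_two]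
    · linear_combination (g * pG) * hsum
    · linear_combination (l * pB) * hsum
  have key : ∀ k : ℕ, Matrix.vecMul ![g, l] (Q ^ k) = c ^ k • ![g, l] := by
    intro k
    induction k with
    | zero => simp
    | succ n ih =>
      rw [pow_succ, ← Matrix.vecMul_vecMul, ih, pow_succ]
      rw [Matrix.smul_vecMul, step, smul_smul, mul_comm]
  intro k _
  exact key k
end

section
/- With λ + γ = 1, π Qˣ e = (1 - p_e)ˣ for every integer x ≥ 1, where e = (1,1)ᵀ, π = (γ, λ), and p_e = γ p_G + λ p_B. -/
open Matrix

theorem pi_Q_pow_e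
    (l g pG pB : ℝ) (hl0 : 0 ≤ l) (hl1 : l ≤ 1) (hg0 : 0 ≤ g) (hg1 : g ≤ 1)
    (hpG0 : 0 ≤ pG) (hpG1 : pG ≤ 1) (hpB0 : 0 ≤ pB) (hpB1 : pB ≤ 1)
    (hsum : l + g = 1) :
    ∀ x : ℕ, 1 ≤ x →
      Matrix.vecMul ![g, l]
          (!![(1 - pG) * (1 - l), (1 - pG) * l;
              (1 - pB) * g, (1 - pB) * (1 - g)] ^ x) ⬝ᵥ ![1, 1]
        = (1 - (g * pG + l * pB)) ^ x := by
  have hl : l = 1 - g := by linarith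
  subst hl
  set Q := !![(1 - pG) * (1 - (1 - g)), (1 - pG) * (1 - g);
              (1 - pB) * g, (1 - pB) * (1 - g)] with hQ
  set c : ℝ := 1 - (g * pG + (1 - g) * pB) with hc
  have key : ∀ x : ℕ, Matrix.vecMul ![g, 1 - g] (Q ^ x) = c ^ x • ![g, 1 - g] := by
    intro x
    induction x with
    | zero => simp
    | succ n ih =>
      rw [pow_succ, ← Matrix.vecMul_vecMul, ih]
      funext i
      fin_cases i <;>
        simp [hQ, Matrix.vecMul, dotProduct, Fin.sum_univ_two, pow_succ, hc] <;>
        ring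
  intro x _
  rw [key x]
  simp [dotProduct, Fin.sum_univ_two, mul_one]
  ring
end

section
/- Define S(x, t) = P^t − Qˣ P^{t−x} for integers 1 ≤ x ≤ t. If λ + γ = 1, then π S(x, t) = h(x) π, where h(x) = 1 − (1 − p_e)ˣ, π = (γ, λ), and p_e = γ p_G + λ p_B. -/
open Matrix

lemma vecMul_pow_smul {v : Fin 2 → ℝ} {A : Matrix (Fin 2) (Fin 2) ℝ} {c : ℝ}
    (h : Matrix.vecMul v A = c • v) (n : ℕ) :
    Matrix.vecMul v (A ^ n) = c ^ n • v := by
  induction n with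
  | zero => simp
  | succ n ih =>
      rw [pow_succ, ← Matrix.vecMul_vecMul, ih, Matrix.smul_vecMul, h, smul_smul, pow_succ]

theorem pi_S_eq
    (l g pG pB : ℝ) (hl0 : 0 ≤ l) (hl1 : l ≤ 1) (hg0 : 0 ≤ g) (hg1 : g ≤ 1)
    (hpG0 : 0 ≤ pG) (hpG1 : pG ≤ 1) (hpB0 : 0 ≤ pB) (hpB1 : pB ≤ 1)
    (hsum : l + g = 1) (x t : ℕ) (hx : 1 ≤ x) (hxt : x ≤ t) :
    Matrix.vecMul ![g, l]
        ((!![1 - l, l; g, 1 - g] : Matrix (Fin 2) (Fin 2) ℝ) ^ t -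
          !![(1 - pG) * (1 - l), (1 - pG) * l;
             (1 - pB) * g, (1 - pB) * (1 - g)] ^ x * !![1 - l, l; g, 1 - g] ^ (t - x))
      = (1 - (1 - (g * pG + l * pB)) ^ x) • ![g, l] := by
  have hP : Matrix.vecMul ![g, l] (!![1 - l, l; g, 1 - g] : Matrix (Fin 2) (Fin 2) ℝ)
      = (1 : ℝ) • ![g, l] := by
    funext i
    fin_cases i <;>
      simp [Matrix.vecMul, dotProduct, Fin.sum_univ_two] <;> nlinarith
  have hQ : Matrix.vecMul ![g, l]
      (!![(1 - pG) * (1 - l), (1 - pG) * l;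
          (1 - pB) * g, (1 - pB) * (1 - g)] : Matrix (Fin 2) (Fin 2) ℝ)
      = (1 - (g * pG + l * pB)) • ![g, l] := by
    funext i
    fin_cases i <;>
      simp [Matrix.vecMul, dotProduct, Fin.sum_univ_two]
    · linear_combination g * pG * hsum
    · linear_combination l * pB * hsum
  rw [Matrix.vecMul_sub, ← Matrix.vecMul_vecMul,
    vecMul_pow_smul hP, vecMul_pow_smul hQ, Matrix.smul_vecMul,
    vecMul_pow_smul hP, smul_smul, one_pow, one_smul, sub_smul, one_smul]
  ring_nf
end

section
/- With λ + γ = 1 and S(x, t) = P^t − Qˣ P^{t−x}, for all n ≥ 1 it holds that π S(x,t)ⁿ = h(x)ⁿ π where h(x) = 1 − (1 − p_e)ˣ. -/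
/-!
`π` is a left eigenvector of `P` (eigenvalue `1`) and of `Q` (eigenvalue `1 - p_e`), hence of
`S(x, t) = P ^ t - Q ^ x * P ^ (t - x)` with eigenvalue `1 - (1 - p_e) ^ x`, and of every power of `S`.
-/

open Matrix

section LeftEigenvector

variable {n R : Type*} [Fintype n] [DecidableEq n] [CommSemiring R]

theorem Matrix.vecMul_pow_of_vecMul_eq_smul {v : n → R} {A : Matrix n n R} {a : R}
    (h : v ᵥ* A = a • v) (k : ℕ) : v ᵥ* A ^ k = a ^ k • v := by
  induction k with
  | zero => simp
  | succ k ih => rw [pow_succ, ← vecMul_vecMul, ih, smul_vecMul, h, smul_smul, pow_succ]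

theorem Matrix.vecMul_pow_of_vecMul_eq_self {v : n → R} {A : Matrix n n R}
    (h : v ᵥ* A = v) (k : ℕ) : v ᵥ* A ^ k = v := by
  simpa using vecMul_pow_of_vecMul_eq_smul (a := (1 : R)) (by rwa [one_smul]) k

end LeftEigenvector

section TwoState

variable {R : Type*} [CommRing R]

theorem vecMul_twoState_stationary (l g : R) :
    ![g, l] ᵥ* !![1 - l, l; g, 1 - g] = ![g, l] := by
  ext i; fin_cases i <;> simp [vecMul, dotProduct, Fin.sum_univ_two] <;> ring

/-- Since `l + g = 1`, both rows of `P` equal `π = ![g, l]`, so the rows of `Q` are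
`(1 - pG) • π` and `(1 - pB) • π`. -/
theorem vecMul_twoState_erasure {l g pG pB : R} (hsum : l + g = 1) :
    ![g, l] ᵥ* !![(1 - pG) * (1 - l), (1 - pG) * l; (1 - pB) * g, (1 - pB) * (1 - g)]
      = (1 - (g * pG + l * pB)) • ![g, l] := by
  obtain rfl : g = 1 - l := by rw [← hsum]; ring
  ext i; fin_cases i <;> simp [vecMul, dotProduct, Fin.sum_univ_two] <;> ring

end TwoState

theorem pi_S_pow_eq_general
    (l g pG pB : ℝ)
    (hsum : l + g = 1) (x t : ℕ) :
    ∀ n : ℕ, 1 ≤ n →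
      Matrix.vecMul ![g, l]
          (((!![1 - l, l; g, 1 - g] : Matrix (Fin 2) (Fin 2) ℝ) ^ t -
             !![(1 - pG) * (1 - l), (1 - pG) * l;
                (1 - pB) * g, (1 - pB) * (1 - g)] ^ x *
               !![1 - l, l; g, 1 - g] ^ (t - x)) ^ n)
        = (1 - (1 - (g * pG + l * pB)) ^ x) ^ n • ![g, l] := by
  intro n _
  have hP := vecMul_pow_of_vecMul_eq_self (vecMul_twoState_stationary l g)
  have hQ := vecMul_pow_of_vecMul_eq_smul (vecMul_twoState_erasure (pG := pG) (pB := pB) hsum)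
  apply vecMul_pow_of_vecMul_eq_smul
  rw [vecMul_sub, ← vecMul_vecMul, hQ, smul_vecMul, hP, hP, sub_smul, one_smul]

theorem pi_S_pow_eq
    (l g pG pB : ℝ) (hl0 : 0 ≤ l) (hl1 : l ≤ 1) (hg0 : 0 ≤ g) (hg1 : g ≤ 1)
    (hpG0 : 0 ≤ pG) (hpG1 : pG ≤ 1) (hpB0 : 0 ≤ pB) (hpB1 : pB ≤ 1)
    (hsum : l + g = 1) (x t : ℕ) (hx : 1 ≤ x) (hxt : x ≤ t) :
    ∀ n : ℕ, 1 ≤ n →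
      Matrix.vecMul ![g, l]
          (((!![1 - l, l; g, 1 - g] : Matrix (Fin 2) (Fin 2) ℝ) ^ t -
             !![(1 - pG) * (1 - l), (1 - pG) * l;
                (1 - pB) * g, (1 - pB) * (1 - g)] ^ x *
               !![1 - l, l; g, 1 - g] ^ (t - x)) ^ n)
        = (1 - (1 - (g * pG + l * pB)) ^ x) ^ n • ![g, l] :=
  pi_S_pow_eq_general l g pG pB hsum x t
end
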